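/- Unisolvency of the rotated-Q1 immersed finite element with midpoint-value degrees of freedom on a Type II interface element: for every β⁻, β⁺ > 0, every d, e ∈ (0,1), and every (v₁,v₂,v₃,v₄) ∈ ℝ⁴, there exists a unique pair of coefficient vectors (c⁻, c⁺) ∈ ℝ⁴ × ℝ⁴ such that the associated piecewise rotated-Q1 function φ satisfies the jump conditions (J1)–(J3) and its four midpoint degrees of freedom satisfy φ(1/2,0) = v₁, φ(1,1/2) = v₂, φ(1/2,1) = v₃, φ(0,1/2) = v₄. -/
import Mathlib

open MeasureTheory Set

noncomputable section

/-- The rotated-Q1 polynomial `c₁ + c₂ x + c₃ y + c₄ (x² − y²)` with coefficient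
vector `c = (c 0, c 1, c 2, c 3)`. -/
def rq1 (c : Fin 4 → ℝ) (x y : ℝ) : ℝ :=
  c 0 + c 1 * x + c 2 * y + c 3 * (x ^ 2 - y ^ 2)

/-- The piecewise rotated-Q1 function on the reference Type II interface element:
`p⁻` where `x ≤ d + (e − d) y`, `p⁺` elsewhere. -/
def phiFn (d e : ℝ) (cm cp : Fin 4 → ℝ) (x y : ℝ) : ℝ :=
  if x ≤ d + (e - d) * y then rq1 cm x y else rq1 cp x y

/-- Jump condition (J1): continuity at the interface points `D = (d,0)` and `E = (e,1)`. -/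
def J1 (d e : ℝ) (cm cp : Fin 4 → ℝ) : Prop :=
  rq1 cm d 0 = rq1 cp d 0 ∧ rq1 cm e 1 = rq1 cp e 1

/-- Jump condition (J2): matching of the `x² − y²` coefficients. -/
def J2 (cm cp : Fin 4 → ℝ) : Prop := cm 3 = cp 3

/-- The flux defect `∫₀¹ (β⁺∇p⁺ − β⁻∇p⁻)((1−t)d + te, t) · (1, d − e) dt`. -/
def fluxDefect (βm βp d e : ℝ) (cm cp : Fin 4 → ℝ) : ℝ :=
  ∫ t in (0:ℝ)..1,
    ((βp * (cp 1 + 2 * cp 3 * ((1 - t) * d + t * e))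
        - βm * (cm 1 + 2 * cm 3 * ((1 - t) * d + t * e))) * 1
      + (βp * (cp 2 - 2 * cp 3 * t) - βm * (cm 2 - 2 * cm 3 * t)) * (d - e))

/-- Jump condition (J3): the integral over `DE` of the jump of the normal flux vanishes. -/
def J3 (βm βp d e : ℝ) (cm cp : Fin 4 → ℝ) : Prop :=
  fluxDefect βm βp d e cm cp = 0

/-- The four edge-mean (integral-value) degrees of freedom of `φ`:
bottom, right, top, left edges of `T = [0,1]²`. -/
def dofI (d e : ℝ) (cm cp : Fin 4 → ℝ) : Fin 4 → ℝ :=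
  ![(∫ x in (0:ℝ)..d, rq1 cm x 0) + ∫ x in d..(1:ℝ), rq1 cp x 0,
    ∫ y in (0:ℝ)..1, rq1 cp 1 y,
    (∫ x in (0:ℝ)..e, rq1 cm x 1) + ∫ x in e..(1:ℝ), rq1 cp x 1,
    ∫ y in (0:ℝ)..1, rq1 cm 0 y]

/-- The four midpoint-value degrees of freedom of `φ`:
values at the midpoints of the bottom, right, top, left edges of `T = [0,1]²`. -/
def dofP (d e : ℝ) (cm cp : Fin 4 → ℝ) : Fin 4 → ℝ :=
  ![phiFn d e cm cp (1/2) 0, phiFn d e cm cp 1 (1/2),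
    phiFn d e cm cp (1/2) 1, phiFn d e cm cp 0 (1/2)]

/-- The partial derivative `∂ₓᵃ∂ᵧᵇ` of the rotated-Q1 polynomial with coefficients `c`. -/
def rq1D (c : Fin 4 → ℝ) : ℕ → ℕ → ℝ → ℝ → ℝ
  | 0, 0, x, y => rq1 c x y
  | 1, 0, x, _ => c 1 + 2 * c 3 * x
  | 0, 1, _, y => c 2 - 2 * c 3 * y
  | 2, 0, _, _ => 2 * c 3
  | 1, 1, _, _ => 0
  | 0, 2, _, _ => -(2 * c 3)
  | _, _, _, _ => 0

/-! ### Auxiliary lemmas -/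

lemma int_linear (a b : ℝ) : ∫ t in (0:ℝ)..1, (a + b * t) = a + b / 2 := by
  have h2 : IntervalIntegrable (fun t : ℝ => b * t) MeasureTheory.volume 0 1 :=
    (continuous_const.mul continuous_id).intervalIntegrable _ _
  rw [intervalIntegral.integral_add intervalIntegrable_const h2,
    intervalIntegral.integral_const_mul]
  simp
  ring

lemma fluxDefect_eq (βm βp d e : ℝ) (cm cp : Fin 4 → ℝ) :
    fluxDefect βm βp d e cm cp =
      (βp * cp 1 - βm * cm 1) + 2 * e * (βp * cp 3 - βm * cm 3)
        + (d - e) * (βp * cp 2 - βm * cm 2) := by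
  unfold fluxDefect
  have h : (fun t : ℝ => ((βp * (cp 1 + 2 * cp 3 * ((1 - t) * d + t * e))
        - βm * (cm 1 + 2 * cm 3 * ((1 - t) * d + t * e))) * 1
      + (βp * (cp 2 - 2 * cp 3 * t) - βm * (cm 2 - 2 * cm 3 * t)) * (d - e)))
      = fun t : ℝ =>
        ((βp * cp 1 - βm * cm 1) + 2 * d * (βp * cp 3 - βm * cm 3)
          + (d - e) * (βp * cp 2 - βm * cm 2))
        + (4 * (e - d) * (βp * cp 3 - βm * cm 3)) * t := by
    funext t; ring
  rw [h, int_linear]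
  ring

set_option maxHeartbeats 1000000 in
/-- The master ∃!-lemma, with the midpoint conditions already written in a
side-independent form, where `t1` (resp. `t3`) is `0` or `1/2 - d` (resp. `1/2 - e`)
according to the side of the bottom (resp. top) midpoint. -/
lemma master (βm βp d e t1 t3 : ℝ) (v : Fin 4 → ℝ)
    (hA : ((βp - βm) * ((d + e - 1) * (t1 + t3 - (1 - (d + e) / 2)) - (1 - (d + e) / 2) + (d - e) * (t1 - t3)) + βp * (1 + (d - e) ^ 2)) ≠ 0) :
    ∃! u : (Fin 4 → ℝ) × (Fin 4 → ℝ),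
      J1 d e u.1 u.2 ∧ J2 u.1 u.2 ∧ J3 βm βp d e u.1 u.2 ∧
      ![u.1 0 + u.1 1 / 2 + u.1 3 / 4 + t1 * (u.2 1 - u.1 1),
        u.2 0 + u.2 1 + u.2 2 / 2 + u.2 3 * (3 / 4),
        u.1 0 + u.1 1 / 2 + u.1 2 - u.1 3 * (3 / 4) + t3 * (u.2 1 - u.1 1),
        u.1 0 + u.1 2 / 2 - u.1 3 / 4] = v := by
  obtain ⟨s, hs⟩ : ∃ s, ((βp - βm) * ((d + e - 1) * (t1 + t3 - (1 - (d + e) / 2)) - (1 - (d + e) / 2) + (d - e) * (t1 - t3)) + βp * (1 + (d - e) ^ 2)) * s = -((βp - βm) * ((v 1 - v 3) - (d - e) * (v 0 - v 2) + (d + e - 1) * (v 1 + v 3 - v 0 - v 2))) :=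
    ⟨_ / ((βp - βm) * ((d + e - 1) * (t1 + t3 - (1 - (d + e) / 2)) - (1 - (d + e) / 2)
        + (d - e) * (t1 - t3)) + βp * (1 + (d - e) ^ 2)),
      by rw [mul_comm]; exact div_mul_cancel₀ _ hA⟩
  refine ⟨(![(v 3 - (((v 1 + v 3 - v 0 - v 2) + (t1 + t3 - (1 - (d + e) / 2)) * s) - (v 0 - v 2) + (t1 - t3) * s) / 2 + ((v 1 + v 3 - v 0 - v 2) + (t1 + t3 - (1 - (d + e) / 2)) * s) / 4), ((v 1 - v 3) - ((v 1 + v 3 - v 0 - v 2) + (t1 + t3 - (1 - (d + e) / 2)) * s) - (1 - (d + e) / 2) * s), (((v 1 + v 3 - v 0 - v 2) + (t1 + t3 - (1 - (d + e) / 2)) * s) - (v 0 - v 2) + (t1 - t3) * s), ((v 1 + v 3 - v 0 - v 2) + (t1 + t3 - (1 - (d + e) / 2)) * s)],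
           ![(v 3 - (((v 1 + v 3 - v 0 - v 2) + (t1 + t3 - (1 - (d + e) / 2)) * s) - (v 0 - v 2) + (t1 - t3) * s) / 2 + ((v 1 + v 3 - v 0 - v 2) + (t1 + t3 - (1 - (d + e) / 2)) * s) / 4) - s * d, ((v 1 - v 3) - ((v 1 + v 3 - v 0 - v 2) + (t1 + t3 - (1 - (d + e) / 2)) * s) - (1 - (d + e) / 2) * s) + s, (((v 1 + v 3 - v 0 - v 2) + (t1 + t3 - (1 - (d + e) / 2)) * s) - (v 0 - v 2) + (t1 - t3) * s) + s * (d - e), ((v 1 + v 3 - v 0 - v 2) + (t1 + t3 - (1 - (d + e) / 2)) * s)]), ⟨?_, ?_, ?_, ?_⟩, ?_⟩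
  · unfold J1
    constructor <;>
      · simp only [rq1, Matrix.cons_val_zero, Matrix.cons_val_one, Matrix.head_cons,
          Matrix.cons_val_two, Matrix.tail_cons, Matrix.cons_val_three]
        ring
  · unfold J2
    simp only [Matrix.cons_val_three, Matrix.cons_val_two, Matrix.tail_cons,
      Matrix.head_cons, Matrix.cons_val_one, Matrix.cons_val_zero]
  · unfold J3
    rw [fluxDefect_eq]
    simp only [Matrix.cons_val_zero, Matrix.cons_val_one, Matrix.head_cons,
      Matrix.cons_val_two, Matrix.tail_cons, Matrix.cons_val_three]
    linear_combination hs
  · funext i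
    fin_cases i <;>
      · simp only [Matrix.cons_val_zero, Matrix.cons_val_one, Matrix.head_cons,
          Matrix.cons_val_two, Matrix.tail_cons, Matrix.cons_val_three, Fin.isValue]
        ring_nf
        try rfl
  · rintro ⟨cm', cp'⟩ ⟨hJ1, hJ2, hJ3, hM⟩
    obtain ⟨H1, H2⟩ := hJ1
    simp only [rq1] at H1 H2
    have H3 : cm' 3 = cp' 3 := hJ2
    unfold J3 at hJ3
    rw [fluxDefect_eq] at hJ3
    have H5 := congrFun hM 0
    have H6 := congrFun hM 1
    have H7 := congrFun hM 2
    have H8 := congrFun hM 3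
    simp only [Matrix.cons_val_zero, Matrix.cons_val_one, Matrix.head_cons,
      Matrix.cons_val_two, Matrix.tail_cons, Matrix.cons_val_three, Fin.isValue] at H5 H6 H7 H8
    have hp3 : cp' 3 = cm' 3 := H3.symm
    have hp2 : cp' 2 = cm' 2 + (cp' 1 - cm' 1) * (d - e) := by
      linear_combination H1 - H2 + (e ^ 2 - 1 - d ^ 2) * H3
    have hp0 : cp' 0 = cm' 0 - (cp' 1 - cm' 1) * d := by
      linear_combination d ^ 2 * H3 - H1
    have hE5 : (βp - βm) * (cm' 1 + 2 * e * cm' 3 + (d - e) * cm' 2)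
        + βp * (cp' 1 - cm' 1) * (1 + (d - e) ^ 2) = 0 := by
      linear_combination hJ3 - 2 * e * βp * hp3 - (d - e) * βp * hp2
    have hE2 : cm' 0 + cm' 1 + cm' 2 / 2 + cm' 3 * (3 / 4)
        + (1 - (d + e) / 2) * (cp' 1 - cm' 1) = v 1 := by
      linear_combination H6 - hp0 - hp2 / 2 - (3 / 4) * hp3
    have hR1 : cm' 3 = (v 1 + v 3 - v 0 - v 2) + (t1 + t3 - (1 - (d + e) / 2)) * (cp' 1 - cm' 1) := by
      linear_combination hE2 + H8 - H5 - H7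
    have hR2 : cm' 1 = (v 1 - v 3) - cm' 3 - (1 - (d + e) / 2) * (cp' 1 - cm' 1) := by
      linear_combination hE2 - H8
    have hR3 : cm' 2 = cm' 3 - (v 0 - v 2) + (t1 - t3) * (cp' 1 - cm' 1) := by
      linear_combination H7 - H5
    have hAs : ((βp - βm) * ((d + e - 1) * (t1 + t3 - (1 - (d + e) / 2)) - (1 - (d + e) / 2) + (d - e) * (t1 - t3)) + βp * (1 + (d - e) ^ 2)) * (cp' 1 - cm' 1) = -((βp - βm) * ((v 1 - v 3) - (d - e) * (v 0 - v 2) + (d + e - 1) * (v 1 + v 3 - v 0 - v 2))) := by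
      linear_combination hE5 - (βp - βm) * hR2 - (βp - βm) * (d - e) * hR3
        - (βp - βm) * (d + e - 1) * hR1
    have hσ : cp' 1 - cm' 1 = s := mul_left_cancel₀ hA (hAs.trans hs.symm)
    have hm3 : cm' 3 = ((v 1 + v 3 - v 0 - v 2) + (t1 + t3 - (1 - (d + e) / 2)) * s) := by linear_combination hR1 + (t1 + t3 - (1 - (d + e) / 2)) * hσ
    have hm1 : cm' 1 = ((v 1 - v 3) - ((v 1 + v 3 - v 0 - v 2) + (t1 + t3 - (1 - (d + e) / 2)) * s) - (1 - (d + e) / 2) * s) := by linear_combination hR2 - hm3 - (1 - (d + e) / 2) * hσ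
    have hm2 : cm' 2 = (((v 1 + v 3 - v 0 - v 2) + (t1 + t3 - (1 - (d + e) / 2)) * s) - (v 0 - v 2) + (t1 - t3) * s) := by linear_combination hR3 + hm3 + (t1 - t3) * hσ
    have hm0 : cm' 0 = (v 3 - (((v 1 + v 3 - v 0 - v 2) + (t1 + t3 - (1 - (d + e) / 2)) * s) - (v 0 - v 2) + (t1 - t3) * s) / 2 + ((v 1 + v 3 - v 0 - v 2) + (t1 + t3 - (1 - (d + e) / 2)) * s) / 4) := by linear_combination H8 - hm2 / 2 + hm3 / 4
    have hq1 : cp' 1 = ((v 1 - v 3) - ((v 1 + v 3 - v 0 - v 2) + (t1 + t3 - (1 - (d + e) / 2)) * s) - (1 - (d + e) / 2) * s) + s := by linear_combination hm1 + hσ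
    have hq0 : cp' 0 = (v 3 - (((v 1 + v 3 - v 0 - v 2) + (t1 + t3 - (1 - (d + e) / 2)) * s) - (v 0 - v 2) + (t1 - t3) * s) / 2 + ((v 1 + v 3 - v 0 - v 2) + (t1 + t3 - (1 - (d + e) / 2)) * s) / 4) - s * d := by linear_combination hp0 + hm0 - d * hσ
    have hq2 : cp' 2 = (((v 1 + v 3 - v 0 - v 2) + (t1 + t3 - (1 - (d + e) / 2)) * s) - (v 0 - v 2) + (t1 - t3) * s) + s * (d - e) := by linear_combination hp2 + hm2 + (d - e) * hσ
    have hq3 : cp' 3 = ((v 1 + v 3 - v 0 - v 2) + (t1 + t3 - (1 - (d + e) / 2)) * s) := hp3.trans hm3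
    simp only [Prod.mk.injEq]
    refine ⟨?_, ?_⟩ <;> funext i <;> fin_cases i
    · exact hm0
    · exact hm1
    · exact hm2
    · exact hm3
    · exact hq0
    · exact hq1
    · exact hq2
    · exact hq3

/-- Evaluation of the midpoint degrees of freedom, given the jump conditions. -/
lemma dofP_eq (d e t1 t3 : ℝ) (hd0 : 0 < d) (hd1 : d < 1) (he0 : 0 < e) (he1 : e < 1)
    (ht1 : (1 / 2 ≤ d ∧ t1 = 0) ∨ (d < 1 / 2 ∧ t1 = 1 / 2 - d))
    (ht3 : (1 / 2 ≤ e ∧ t3 = 0) ∨ (e < 1 / 2 ∧ t3 = 1 / 2 - e))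
    (cm cp : Fin 4 → ℝ) (h1 : J1 d e cm cp) (h2 : J2 cm cp) :
    dofP d e cm cp =
      ![cm 0 + cm 1 / 2 + cm 3 / 4 + t1 * (cp 1 - cm 1),
        cp 0 + cp 1 + cp 2 / 2 + cp 3 * (3 / 4),
        cm 0 + cm 1 / 2 + cm 2 - cm 3 * (3 / 4) + t3 * (cp 1 - cm 1),
        cm 0 + cm 2 / 2 - cm 3 / 4] := by
  obtain ⟨H1, H2⟩ := h1
  have H3 : cm 3 = cp 3 := h2
  simp only [rq1] at H1 H2
  have hb : d + (e - d) * (0:ℝ) = d := by ring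
  have ht : d + (e - d) * (1:ℝ) = e := by ring
  have hm : d + (e - d) * ((1:ℝ)/2) = (d + e) / 2 := by ring
  funext i
  fin_cases i
  · show phiFn d e cm cp (1/2) 0 = cm 0 + cm 1 / 2 + cm 3 / 4 + t1 * (cp 1 - cm 1)
    unfold phiFn
    rw [hb]
    rcases ht1 with ⟨hle, hteq⟩ | ⟨hlt, hteq⟩
    · rw [if_pos hle, hteq]
      simp only [rq1]; ring
    · rw [if_neg (not_le.mpr hlt), hteq]
      simp only [rq1]
      linear_combination (d ^ 2 - 1 / 4) * H3 - H1
  · show phiFn d e cm cp 1 (1/2) = cp 0 + cp 1 + cp 2 / 2 + cp 3 * (3 / 4)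
    unfold phiFn
    rw [hm, if_neg (not_le.mpr (by linarith))]
    simp only [rq1]; ring
  · show phiFn d e cm cp (1/2) 1
        = cm 0 + cm 1 / 2 + cm 2 - cm 3 * (3 / 4) + t3 * (cp 1 - cm 1)
    unfold phiFn
    rw [ht]
    rcases ht3 with ⟨hle, hteq⟩ | ⟨hlt, hteq⟩
    · rw [if_pos hle, hteq]
      simp only [rq1]; ring
    · rw [if_neg (not_le.mpr hlt), hteq]
      simp only [rq1]
      linear_combination (e ^ 2 - 1 / 4) * H3 - H2
  · show phiFn d e cm cp 0 (1/2) = cm 0 + cm 2 / 2 - cm 3 / 4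
    unfold phiFn
    rw [hm, if_pos (by linarith)]
    simp only [rq1]; ring

/-- Reduction of the unisolvency statement to the master lemma. -/
lemma bridge (βm βp d e t1 t3 : ℝ) (hd0 : 0 < d) (hd1 : d < 1) (he0 : 0 < e) (he1 : e < 1)
    (ht1 : (1 / 2 ≤ d ∧ t1 = 0) ∨ (d < 1 / 2 ∧ t1 = 1 / 2 - d))
    (ht3 : (1 / 2 ≤ e ∧ t3 = 0) ∨ (e < 1 / 2 ∧ t3 = 1 / 2 - e))
    (hA : ((βp - βm) * ((d + e - 1) * (t1 + t3 - (1 - (d + e) / 2)) - (1 - (d + e) / 2) + (d - e) * (t1 - t3)) + βp * (1 + (d - e) ^ 2)) ≠ 0)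
    (v : Fin 4 → ℝ) :
    ∃! c : (Fin 4 → ℝ) × (Fin 4 → ℝ),
      J1 d e c.1 c.2 ∧ J2 c.1 c.2 ∧ J3 βm βp d e c.1 c.2 ∧
        dofP d e c.1 c.2 = v := by
  obtain ⟨u, hu, huniq⟩ := master βm βp d e t1 t3 v hA
  have conv : ∀ w : (Fin 4 → ℝ) × (Fin 4 → ℝ), J1 d e w.1 w.2 → J2 w.1 w.2 →
      dofP d e w.1 w.2 =
        ![w.1 0 + w.1 1 / 2 + w.1 3 / 4 + t1 * (w.2 1 - w.1 1),
          w.2 0 + w.2 1 + w.2 2 / 2 + w.2 3 * (3 / 4),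
          w.1 0 + w.1 1 / 2 + w.1 2 - w.1 3 * (3 / 4) + t3 * (w.2 1 - w.1 1),
          w.1 0 + w.1 2 / 2 - w.1 3 / 4] :=
    fun w hw1 hw2 => dofP_eq d e t1 t3 hd0 hd1 he0 he1 ht1 ht3 w.1 w.2 hw1 hw2
  refine ⟨u, ⟨hu.1, hu.2.1, hu.2.2.1, ?_⟩, fun y hy =>
    huniq y ⟨hy.1, hy.2.1, hy.2.2.1, ?_⟩⟩
  · rw [conv u hu.1 hu.2.1]; exact hu.2.2.2
  · rw [← conv y hy.1 hy.2.1]; exact hy.2.2.2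

/-- Unisolvency of the rotated-Q1 IFE with midpoint-value degrees of
freedom on a Type II interface element. -/
theorem midpoint_unisolvency
    (βm βp : ℝ) (hβm : 0 < βm) (hβp : 0 < βp)
    (d e : ℝ) (hd : d ∈ Ioo (0:ℝ) 1) (he : e ∈ Ioo (0:ℝ) 1)
    (v : Fin 4 → ℝ) :
    ∃! c : (Fin 4 → ℝ) × (Fin 4 → ℝ),
      J1 d e c.1 c.2 ∧ J2 c.1 c.2 ∧ J3 βm βp d e c.1 c.2 ∧
        dofP d e c.1 c.2 = v := by
  obtain ⟨hd0, hd1⟩ := hd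
  obtain ⟨he0, he1⟩ := he
  rcases le_or_gt (1/2 : ℝ) d with hcd | hcd <;> rcases le_or_gt (1/2 : ℝ) e with hce | hce
  · -- 1/2 ≤ d, 1/2 ≤ e : t1 = 0, t3 = 0
    refine bridge βm βp d e 0 0 hd0 hd1 he0 he1 (Or.inl ⟨hcd, rfl⟩) (Or.inl ⟨hce, rfl⟩) ?_ v
    apply ne_of_gt
    have hX : 0 < 1 + (d - e) ^ 2 - (1 - (d + e) / 2) * (d + e) := by
      nlinarith [sq_nonneg (d + e - 1), sq_nonneg (d - e)]
    have hY : 0 < (1 - (d + e) / 2) * (d + e) := by nlinarith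
    nlinarith [mul_pos hβp hX, mul_pos hβm hY]
  · -- 1/2 ≤ d, e < 1/2 : t1 = 0, t3 = 1/2 - e
    refine bridge βm βp d e 0 (1/2 - e) hd0 hd1 he0 he1 (Or.inl ⟨hcd, rfl⟩)
      (Or.inr ⟨hce, rfl⟩) ?_ v
    apply ne_of_gt
    have hX : 0 < 1 + (d - e) ^ 2 + ((d + e - 1) * (0 + (1/2 - e) - (1 - (d + e) / 2))
        - (1 - (d + e) / 2) + (d - e) * (0 - (1/2 - e))) := by
      nlinarith [sq_nonneg (d + e - 1), sq_nonneg (d - e), mul_pos hd0 he0,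
        mul_pos (sub_pos.mpr hd1) (sub_pos.mpr he1)]
    have hY : 0 < -((d + e - 1) * (0 + (1/2 - e) - (1 - (d + e) / 2))
        - (1 - (d + e) / 2) + (d - e) * (0 - (1/2 - e))) := by
      nlinarith [sq_nonneg (d + e - 1), sq_nonneg (d - e), mul_pos hd0 he0,
        mul_pos (sub_pos.mpr hd1) (sub_pos.mpr he1)]
    nlinarith [mul_pos hβp hX, mul_pos hβm hY]
  · -- d < 1/2, 1/2 ≤ e : t1 = 1/2 - d, t3 = 0
    refine bridge βm βp d e (1/2 - d) 0 hd0 hd1 he0 he1 (Or.inr ⟨hcd, rfl⟩)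
      (Or.inl ⟨hce, rfl⟩) ?_ v
    apply ne_of_gt
    have hX : 0 < 1 + (d - e) ^ 2 + ((d + e - 1) * ((1/2 - d) + 0 - (1 - (d + e) / 2))
        - (1 - (d + e) / 2) + (d - e) * ((1/2 - d) - 0)) := by
      nlinarith [sq_nonneg (d + e - 1), sq_nonneg (d - e), mul_pos hd0 he0,
        mul_pos (sub_pos.mpr hd1) (sub_pos.mpr he1)]
    have hY : 0 < -((d + e - 1) * ((1/2 - d) + 0 - (1 - (d + e) / 2))
        - (1 - (d + e) / 2) + (d - e) * ((1/2 - d) - 0)) := by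
      nlinarith [sq_nonneg (d + e - 1), sq_nonneg (d - e), mul_pos hd0 he0,
        mul_pos (sub_pos.mpr hd1) (sub_pos.mpr he1)]
    nlinarith [mul_pos hβp hX, mul_pos hβm hY]
  · -- d < 1/2, e < 1/2 : t1 = 1/2 - d, t3 = 1/2 - e
    refine bridge βm βp d e (1/2 - d) (1/2 - e) hd0 hd1 he0 he1 (Or.inr ⟨hcd, rfl⟩)
      (Or.inr ⟨hce, rfl⟩) ?_ v
    apply ne_of_gt
    have hX : 0 < 1 + (d - e) ^ 2 + ((d + e - 1) * ((1/2 - d) + (1/2 - e) - (1 - (d + e) / 2))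
        - (1 - (d + e) / 2) + (d - e) * ((1/2 - d) - (1/2 - e))) := by
      nlinarith [sq_nonneg (d + e - 1), sq_nonneg (d - e), mul_pos hd0 he0]
    have hY : 0 < -((d + e - 1) * ((1/2 - d) + (1/2 - e) - (1 - (d + e) / 2))
        - (1 - (d + e) / 2) + (d - e) * ((1/2 - d) - (1/2 - e))) := by
      nlinarith [sq_nonneg (d + e - 1), sq_nonneg (d - e)]
    nlinarith [mul_pos hβp hX, mul_pos hβm hY]

end
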